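/- Let L be the clause gadget (3-cycle z1z2z3, 14-cycle u1…u14, pendants ℓ4, ℓ7, ℓ10, and edges z1u1, u4ℓ4, u7ℓ7, u10ℓ10). For any prescribed values p4, p7, p10 ∈ {(2,1),(3,0)} with at least one equal to (2,1), there exists a 2-edge-coloring c of L such that c* is a proper vertex coloring of L and c*(u4)=p4, c*(u7)=p7, c*(u10)=p10. -/

import Mathlib

open Finset

/-- The color-blind partition of `v`: the multiset of (nonzero) counts of incident
edges of each color, i.e. the partition of `deg v` with trailing zeroes removed. -/
def cbp {V : Type*} [Fintype V] [DecidableEq V] (G : SimpleGraph V) [DecidableRel G.Adj]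
    {k : ℕ} (c : Sym2 V → Fin k) (v : V) : Multiset ℕ :=
  (((Finset.univ : Finset (Fin k)).val.map fun i =>
    ((G.neighborFinset v).filter fun w => c s(v, w) = i).card).filter fun m => m ≠ 0)

/-- `c` is a color-blind distinguishing edge-coloring of `G`. -/
def IsCBD {V : Type*} [Fintype V] [DecidableEq V] (G : SimpleGraph V) [DecidableRel G.Adj]
    {k : ℕ} (c : Sym2 V → Fin k) : Prop :=
  ∀ u v : V, G.Adj u v → cbp G c u ≠ cbp G c v

/-- Edges of the clause gadget: vertices 0,1,2 are z1,z2,z3; 3,...,16 are u1,...,u14;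
17,18,19 are the pendants ℓ4, ℓ7, ℓ10 (so u4 = 6, u7 = 9, u10 = 12). -/
def clauseRel (p q : Fin 20) : Prop :=
  (p.val, q.val) ∈ [(0,1),(1,2),(0,2),(0,3),(3,4),(4,5),(5,6),(6,7),(7,8),(8,9),(9,10),
    (10,11),(11,12),(12,13),(13,14),(14,15),(15,16),(16,3),(6,17),(9,18),(12,19)]

instance : DecidableRel clauseRel := fun p q => by unfold clauseRel; infer_instance

/-- The clause gadget `L`. -/
def clauseGadget : SimpleGraph (Fin 20) where
  Adj p q := p ≠ q ∧ (clauseRel p q ∨ clauseRel q p)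
  symm := ⟨fun p q h => ⟨h.1.symm, h.2.symm⟩⟩
  loopless := ⟨fun p h => h.1 rfl⟩

instance : DecidableRel clauseGadget.Adj := fun p q =>
  inferInstanceAs (Decidable (p ≠ q ∧ (clauseRel p q ∨ clauseRel q p)))

/-!
The entries of `c*(v)` sum to `deg v`, so `c*` can only fail to be proper on an edge joining
two vertices of equal degree: `z2z3`, `z1u1`, and the edges between consecutive degree-2
vertices of the 14-cycle (`u2u3`, `u5u6`, `u8u9`, `u11u12`, `u12u13`, `u13u14`). For each of
the seven admissible choices of partitions at `u4`, `u7`, `u10` these local constraints are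
easy to meet; the colourings are given by their colour-1 edges and checked by evaluation.
-/

/-- The colour-blind partition of a vertex of degree 3 under a 2-edge-colouring:
`{3}` if its edges are monochromatic, `{2, 1}` otherwise. -/
def cubicCbp (mono : Bool) : Multiset ℕ :=
  if mono then {3} else {2, 1}

theorem cubicCbp_eq_pair_iff {mono : Bool} : cubicCbp mono = {2, 1} ↔ mono = false := by
  cases mono <;> decide

theorem exists_cubicCbp_eq {p : Multiset ℕ} (hp : p = {2, 1} ∨ p = {3}) :
    ∃ mono, cubicCbp mono = p := by
  rcases hp with rfl | rfl
  exacts [⟨false, rfl⟩, ⟨true, rfl⟩]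

def gadgetRedEdges : Bool → Bool → Bool → List (Sym2 (Fin 20))
  | false, false, false => [s(0, 1), s(5, 6), s(8, 9), s(11, 12), s(13, 14), s(14, 15)]
  | false, false, true => [s(0, 1), s(5, 6), s(6, 7), s(9, 10), s(13, 14), s(14, 15)]
  | false, true, false => [s(0, 1), s(5, 6), s(6, 7), s(11, 12), s(13, 14), s(14, 15)]
  | false, true, true =>
    [s(0, 1), s(5, 6), s(8, 9), s(9, 10), s(13, 14), s(14, 15), s(9, 18)]
  | true, false, false =>
    [s(0, 1), s(0, 3), s(3, 4), s(8, 9), s(9, 10), s(12, 13), s(13, 14), s(16, 3)]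
  | true, false, true =>
    [s(0, 1), s(5, 6), s(6, 7), s(9, 10), s(13, 14), s(14, 15), s(6, 17)]
  | true, true, false =>
    [s(0, 1), s(5, 6), s(6, 7), s(11, 12), s(13, 14), s(14, 15), s(6, 17)]
  | true, true, true => [] -- no proper colouring exists in this case

def gadgetColoring (mono4 mono7 mono10 : Bool) (e : Sym2 (Fin 20)) : Fin 2 :=
  if e ∈ gadgetRedEdges mono4 mono7 mono10 then 1 else 0

theorem cbp_gadgetColoring (mono4 mono7 mono10 : Bool) :
    cbp clauseGadget (gadgetColoring mono4 mono7 mono10) 6 = cubicCbp mono4 ∧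
      cbp clauseGadget (gadgetColoring mono4 mono7 mono10) 9 = cubicCbp mono7 ∧
      cbp clauseGadget (gadgetColoring mono4 mono7 mono10) 12 = cubicCbp mono10 := by
  revert mono4 mono7 mono10
  decide

theorem isCBD_gadgetColoring {mono4 mono7 mono10 : Bool}
    (h : (mono4 && mono7 && mono10) = false) :
    IsCBD clauseGadget (gadgetColoring mono4 mono7 mono10) := by
  revert mono4 mono7 mono10
  unfold IsCBD
  decide

theorem clause_gadget_realizes_prescribed_partitions (p4 p7 p10 : Multiset ℕ)
    (h4 : p4 = {2, 1} ∨ p4 = {3}) (h7 : p7 = {2, 1} ∨ p7 = {3})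
    (h10 : p10 = {2, 1} ∨ p10 = {3})
    (hone : p4 = {2, 1} ∨ p7 = {2, 1} ∨ p10 = {2, 1}) :
    ∃ c : Sym2 (Fin 20) → Fin 2, IsCBD clauseGadget c ∧
      cbp clauseGadget c 6 = p4 ∧ cbp clauseGadget c 9 = p7 ∧
      cbp clauseGadget c 12 = p10 := by
  obtain ⟨mono4, rfl⟩ := exists_cubicCbp_eq h4
  obtain ⟨mono7, rfl⟩ := exists_cubicCbp_eq h7
  obtain ⟨mono10, rfl⟩ := exists_cubicCbp_eq h10
  have hmono : (mono4 && mono7 && mono10) = false := by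
    simp only [cubicCbp_eq_pair_iff] at hone
    rcases hone with rfl | rfl | rfl <;> simp
  exact ⟨gadgetColoring mono4 mono7 mono10, isCBD_gadgetColoring hmono,
    cbp_gadgetColoring mono4 mono7 mono10⟩
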